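/- Let k ≥ 2, d ≥ 2, and r ≥ 1 be integers. Define polynomials F^{k,d}_n ∈ ℝ[x] by F^{k,d}_0 = 0, F^{k,d}_1 = 1, and F^{k,d}_{n+1} = (x − (d−2))·F^{k,d}_n − k(d−1)·F^{k,d}_{n-1} for n ≥ 1, and set G^{k,d}_n = x·F^{k,d}_n − k(d−1)·F^{k,d}_{n-1}. If λ ∈ ℝ is a root of G^{k,d}_{r+1}, then λ is an eigenvalue of the adjacency matrix of the graph Y^{k,d}_r. -/

import Mathlib

open Polynomial

/-- Vertices of the upper adjacency graph `Y^{k,d}_r` of the `k`-regular rooted fan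
of dimension `d` and depth `r`: besides the root (the empty word), a vertex at depth
`m ≥ 1` is a word of length `m` whose letters record, at each step, which of the `k`
attached copies of `K_{d−1}` was entered and which of its `d − 1` vertices was chosen. -/
abbrev FanV (k d r : ℕ) := Σ m : Fin (r + 1), Fin (m : ℕ) → Fin k × Fin (d - 1)

/-- `y` is a child of `x`: the word `y` extends the word `x` by one letter. -/
def FanExt {k d r : ℕ} (x y : FanV k d r) : Prop :=
  ∃ h : (y.1 : ℕ) = (x.1 : ℕ) + 1,
    ∀ i : Fin (x.1 : ℕ), y.2 ⟨(i : ℕ), by have := i.isLt; omega⟩ = x.2 i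

/-- `x` and `y` are siblings: distinct vertices of the same depth `m ≥ 1`, with the
same parent and lying in the same copy of `K_{d−1}` (same first component of the last
letter) but corresponding to different vertices of that copy. -/
def FanSib {k d r : ℕ} (x y : FanV k d r) : Prop :=
  ∃ h : (y.1 : ℕ) = (x.1 : ℕ),
    0 < (x.1 : ℕ) ∧
    (∀ i : Fin (x.1 : ℕ), (i : ℕ) + 1 < (x.1 : ℕ) →
        y.2 ⟨(i : ℕ), by have := i.isLt; omega⟩ = x.2 i) ∧
    ∀ i : Fin (x.1 : ℕ), (i : ℕ) + 1 = (x.1 : ℕ) →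
        (y.2 ⟨(i : ℕ), by have := i.isLt; omega⟩).1 = (x.2 i).1 ∧
        (y.2 ⟨(i : ℕ), by have := i.isLt; omega⟩).2 ≠ (x.2 i).2

/-- Upper adjacency in the fan: parent/child or sibling relation. -/
def FanAdj {k d r : ℕ} (x y : FanV k d r) : Prop :=
  FanExt x y ∨ FanExt y x ∨ FanSib x y ∨ FanSib y x

section Lemmas
open Classical Finset
variable {k d r : ℕ}

lemma fanV_eq (y z : FanV k d r) (h : (y.1 : ℕ) = (z.1 : ℕ))
    (h2 : ∀ (i : ℕ) (hi : i < (y.1 : ℕ)) (hi' : i < (z.1 : ℕ)),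
      y.2 ⟨i, hi⟩ = z.2 ⟨i, hi'⟩) : y = z := by
  obtain ⟨⟨n, hn⟩, g⟩ := y
  obtain ⟨⟨m, hm⟩, g'⟩ := z
  dsimp only at h h2
  subst h
  refine congrArg (fun gg => (⟨⟨n, hn⟩, gg⟩ : FanV k d r)) ?_
  funext i
  exact h2 i i.isLt i.isLt

lemma fanExt_depth {x y : FanV k d r} (h : FanExt x y) : (y.1 : ℕ) = (x.1 : ℕ) + 1 := by
  obtain ⟨h1, _⟩ := h; exact h1

lemma fanSib_depth {x y : FanV k d r} (h : FanSib x y) : (y.1 : ℕ) = (x.1 : ℕ) := by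
  obtain ⟨h1, _⟩ := h; exact h1

lemma fanSib_symm {x y : FanV k d r} (h : FanSib x y) : FanSib y x := by
  obtain ⟨h1, hpos, hpre, hlast⟩ := h
  refine ⟨h1.symm, by omega, ?_, ?_⟩
  · intro i hi
    exact (hpre ⟨(i : ℕ), by omega⟩ (by simpa using by omega)).symm
  · intro i hi
    obtain ⟨e1, e2⟩ := hlast ⟨(i : ℕ), by omega⟩ (by simpa using by omega)
    exact ⟨e1.symm, fun e => e2 e.symm⟩

lemma fanAdj_iff (x y : FanV k d r) :
    FanAdj x y ↔ FanExt x y ∨ FanExt y x ∨ FanSib x y := by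
  constructor
  · rintro (h | h | h | h)
    · exact Or.inl h
    · exact Or.inr (Or.inl h)
    · exact Or.inr (Or.inr h)
    · exact Or.inr (Or.inr (fanSib_symm h))
  · rintro (h | h | h)
    · exact Or.inl h
    · exact Or.inr (Or.inl h)
    · exact Or.inr (Or.inr (Or.inl h))

lemma adj_split (x y : FanV k d r) (c : ℝ) :
    (if FanAdj x y then c else 0) =
      (if FanExt x y then c else 0) + (if FanExt y x then c else 0)
        + (if FanSib x y then c else 0) := by
  by_cases h1 : FanExt x y
  · have d1 := fanExt_depth h1
    have h2 : ¬ FanExt y x := fun h => by have := fanExt_depth h; omega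
    have h3 : ¬ FanSib x y := fun h => by have := fanSib_depth h; omega
    have hA : FanAdj x y := Or.inl h1
    simp [h1, h2, h3, hA]
  · by_cases h2 : FanExt y x
    · have d2 := fanExt_depth h2
      have h3 : ¬ FanSib x y := fun h => by have := fanSib_depth h; omega
      have hA : FanAdj x y := Or.inr (Or.inl h2)
      simp [h1, h2, h3, hA]
    · by_cases h3 : FanSib x y
      · have hA : FanAdj x y := Or.inr (Or.inr (Or.inl h3))
        simp [h1, h2, h3, hA]
      · have hA : ¬ FanAdj x y := by rw [fanAdj_iff]; tauto
        simp [h1, h2, h3, hA]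

/-! ### children -/

def childOf (x : FanV k d r) (h : (x.1 : ℕ) < r) (a : Fin k × Fin (d - 1)) : FanV k d r :=
  ⟨⟨(x.1 : ℕ) + 1, by omega⟩, Fin.snoc x.2 a⟩

lemma fanExt_childOf (x : FanV k d r) (h : (x.1 : ℕ) < r) (a : Fin k × Fin (d - 1)) :
    FanExt x (childOf x h a) := by
  refine ⟨rfl, fun i => ?_⟩
  exact Fin.snoc_castSucc (α := fun _ => Fin k × Fin (d - 1)) a x.2 i

lemma childOf_eq (x : FanV k d r) (hxr : (x.1 : ℕ) < r) (y : FanV k d r)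
    (hy : FanExt x y) (a : Fin k × Fin (d - 1))
    (ha : ∀ h : (x.1 : ℕ) < (y.1 : ℕ), a = y.2 ⟨(x.1 : ℕ), h⟩) :
    childOf x hxr a = y := by
  obtain ⟨h1, h2⟩ := hy
  refine fanV_eq _ _ (show (x.1 : ℕ) + 1 = (y.1 : ℕ) by omega) ?_
  intro i hi hi'
  rcases Nat.lt_or_ge i (x.1 : ℕ) with h | h
  · show Fin.snoc (α := fun _ => Fin k × Fin (d - 1)) x.2 a (Fin.castSucc ⟨i, h⟩)
      = y.2 ⟨i, hi'⟩
    rw [Fin.snoc_castSucc]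
    exact (h2 ⟨i, h⟩).symm
  · have hiM : i = (x.1 : ℕ) := by omega
    subst hiM
    show Fin.snoc (α := fun _ => Fin k × Fin (d - 1)) x.2 a (Fin.last (x.1 : ℕ))
      = y.2 ⟨(x.1 : ℕ), hi'⟩
    rw [Fin.snoc_last]
    rw [ha (by omega)]

lemma sum_fanExt_child (hk : 2 ≤ k) (hd : 2 ≤ d) (x : FanV k d r) (f : ℕ → ℝ)
    (hf : (x.1 : ℕ) = r → f ((x.1 : ℕ) + 1) = 0) :
    (∑ y : FanV k d r, if FanExt x y then f (y.1 : ℕ) else 0)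
      = (k : ℝ) * ((d : ℝ) - 1) * f ((x.1 : ℕ) + 1) := by
  classical
  by_cases hxr : (x.1 : ℕ) < r
  · rw [← Finset.sum_filter]
    have key : ∑ a ∈ (univ : Finset (Fin k × Fin (d - 1))), f ((x.1 : ℕ) + 1)
        = ∑ y ∈ univ.filter (fun y => FanExt x y), f (y.1 : ℕ) := by
      refine Finset.sum_nbij' (childOf x hxr)
        (fun y => if h : (x.1 : ℕ) < (y.1 : ℕ) then y.2 ⟨(x.1 : ℕ), h⟩ else
          (⟨0, by omega⟩, ⟨0, by omega⟩)) ?_ ?_ ?_ ?_ ?_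
      · intro a _
        simp [Finset.mem_filter, fanExt_childOf]
      · intro y _; exact Finset.mem_univ _
      · intro a _
        simp only [childOf]
        refine (dif_pos (Nat.lt_succ_self _)).trans ?_
        exact Fin.snoc_last (α := fun _ => Fin k × Fin (d - 1)) a x.2
      · intro y hy
        rw [Finset.mem_filter] at hy
        refine childOf_eq x hxr y hy.2 _ ?_
        intro h
        exact dif_pos h
      · intro a _
        rfl
    rw [← key, Finset.sum_const]
    simp only [Finset.card_univ, Fintype.card_prod, Fintype.card_fin]
    rw [nsmul_eq_mul]
    push_cast [Nat.cast_sub (by omega : 1 ≤ d)]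
    ring
  · have hxr' : (x.1 : ℕ) = r := by have := x.1.isLt; omega
    have hno : ∀ y : FanV k d r, ¬ FanExt x y := by
      intro y h
      have := fanExt_depth h
      have := y.1.isLt
      omega
    rw [hf hxr']
    simp [hno]

/-! ### parent -/

def parentOf (x : FanV k d r) : FanV k d r :=
  ⟨⟨(x.1 : ℕ) - 1, by have := x.1.isLt; omega⟩,
    fun i => x.2 ⟨(i : ℕ), by have h : (i : ℕ) < (x.1 : ℕ) - 1 := i.isLt; omega⟩⟩

lemma sum_fanExt_parent (x : FanV k d r) (f : ℕ → ℝ) :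
    (∑ y : FanV k d r, if FanExt y x then f (y.1 : ℕ) else 0)
      = if 0 < (x.1 : ℕ) then f ((x.1 : ℕ) - 1) else 0 := by
  classical
  by_cases hx : 0 < (x.1 : ℕ)
  · have hchar : ∀ y : FanV k d r, FanExt y x ↔ y = parentOf x := by
      intro y
      constructor
      · rintro ⟨h1, h2⟩
        refine fanV_eq _ _ (show (y.1 : ℕ) = (x.1 : ℕ) - 1 by omega) ?_
        intro i hi hi'
        exact (h2 ⟨i, hi⟩).symm
      · rintro rfl
        exact ⟨show (x.1 : ℕ) = (x.1 : ℕ) - 1 + 1 by omega, fun i => rfl⟩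
    rw [if_pos hx]
    calc (∑ y : FanV k d r, if FanExt y x then f (y.1 : ℕ) else 0)
        = ∑ y : FanV k d r, if y = parentOf x then f (y.1 : ℕ) else 0 := by
          refine Finset.sum_congr rfl fun y _ => ?_
          simp only [hchar]
      _ = f ((parentOf x).1 : ℕ) := by
          rw [Finset.sum_ite_eq' Finset.univ (parentOf x) (fun y => f (y.1 : ℕ))]
          simp
      _ = f ((x.1 : ℕ) - 1) := rfl
  · have hno : ∀ y : FanV k d r, ¬ FanExt y x := by
      intro y h
      have := fanExt_depth h
      omega
    simp [hno, hx]

/-! ### siblings -/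

def sibOf (x : FanV k d r) (hx : 0 < (x.1 : ℕ)) (b : Fin (d - 1)) : FanV k d r :=
  ⟨x.1, Function.update x.2 ⟨(x.1 : ℕ) - 1, by omega⟩
    ((x.2 ⟨(x.1 : ℕ) - 1, by omega⟩).1, b)⟩

lemma sibOf_snd_ne (x : FanV k d r) (hx : 0 < (x.1 : ℕ)) (b : Fin (d - 1))
    (j : Fin (x.1 : ℕ)) (hj : (j : ℕ) + 1 ≠ (x.1 : ℕ)) :
    (sibOf x hx b).2 j = x.2 j := by
  dsimp only [sibOf]
  rw [Function.update_of_ne (fun e => by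
    have : (j : ℕ) = (x.1 : ℕ) - 1 := congrArg Fin.val e
    have := j.isLt
    omega)]

lemma sibOf_snd_eq (x : FanV k d r) (hx : 0 < (x.1 : ℕ)) (b : Fin (d - 1))
    (j : Fin (x.1 : ℕ)) (hj : (j : ℕ) + 1 = (x.1 : ℕ)) :
    (sibOf x hx b).2 j = ((x.2 j).1, b) := by
  have ej : j = (⟨(x.1 : ℕ) - 1, by omega⟩ : Fin (x.1 : ℕ)) :=
    Fin.ext (show (j : ℕ) = (x.1 : ℕ) - 1 by omega)
  rw [ej]
  dsimp only [sibOf]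
  rw [Function.update_self]

lemma fanSib_sibOf (x : FanV k d r) (hx : 0 < (x.1 : ℕ)) (b : Fin (d - 1))
    (hb : b ≠ (x.2 ⟨(x.1 : ℕ) - 1, by omega⟩).2) :
    FanSib x (sibOf x hx b) := by
  refine ⟨rfl, hx, ?_, ?_⟩
  · intro i hi
    exact sibOf_snd_ne x hx b i (by omega)
  · intro i hi
    have h1 : (sibOf x hx b).2 i = ((x.2 i).1, b) := sibOf_snd_eq x hx b i hi
    have h2 : ((sibOf x hx b).2 i).1 = (x.2 i).1 ∧ ((sibOf x hx b).2 i).2 ≠ (x.2 i).2 := by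
      rw [h1]
      refine ⟨rfl, ?_⟩
      have ei : i = (⟨(x.1 : ℕ) - 1, by omega⟩ : Fin (x.1 : ℕ)) :=
        Fin.ext (show (i : ℕ) = (x.1 : ℕ) - 1 by omega)
      rw [ei]
      exact hb
    exact h2

lemma sibOf_eq (x : FanV k d r) (hx : 0 < (x.1 : ℕ)) (y : FanV k d r)
    (hy : FanSib x y) (b : Fin (d - 1))
    (hb : ∀ h : (x.1 : ℕ) - 1 < (y.1 : ℕ), b = (y.2 ⟨(x.1 : ℕ) - 1, h⟩).2) :
    sibOf x hx b = y := by
  obtain ⟨h1, hpos, hpre, hlast⟩ := hy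
  refine fanV_eq _ _ (show (x.1 : ℕ) = (y.1 : ℕ) by omega) ?_
  intro i hi hi'
  have hix : i < (x.1 : ℕ) := hi
  rcases Nat.lt_or_ge (i + 1) (x.1 : ℕ) with h | h
  · have e1 : (sibOf x hx b).2 ⟨i, hi⟩ = x.2 ⟨i, hix⟩ :=
      sibOf_snd_ne x hx b ⟨i, hix⟩ (show i + 1 ≠ (x.1 : ℕ) by omega)
    rw [e1]
    exact (hpre ⟨i, hix⟩ h).symm
  · have hiM : i + 1 = (x.1 : ℕ) := by omega
    have e1 : (sibOf x hx b).2 ⟨i, hi⟩ = ((x.2 ⟨i, hix⟩).1, b) :=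
      sibOf_snd_eq x hx b ⟨i, hix⟩ hiM
    rw [e1]
    obtain ⟨f1, f2⟩ := hlast ⟨i, hix⟩ hiM
    rw [hb (by omega)]
    refine Prod.ext f1.symm ?_
    show (y.2 ⟨(x.1 : ℕ) - 1, _⟩).2 = (y.2 ⟨i, hi'⟩).2
    have : (⟨(x.1 : ℕ) - 1, by omega⟩ : Fin (y.1 : ℕ)) = ⟨i, hi'⟩ :=
      Fin.ext (show (x.1 : ℕ) - 1 = i by omega)
    rw [this]

lemma sum_fanSib (hd : 2 ≤ d) (x : FanV k d r) (f : ℕ → ℝ) :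
    (∑ y : FanV k d r, if FanSib x y then f (y.1 : ℕ) else 0)
      = if 0 < (x.1 : ℕ) then ((d : ℝ) - 2) * f (x.1 : ℕ) else 0 := by
  classical
  by_cases hx : 0 < (x.1 : ℕ)
  · rw [if_pos hx, ← Finset.sum_filter]
    set c : Fin (d - 1) := (x.2 ⟨(x.1 : ℕ) - 1, by omega⟩).2 with hc
    have key : ∑ b ∈ (univ.filter fun b : Fin (d - 1) => b ≠ c), f (x.1 : ℕ)
        = ∑ y ∈ univ.filter (fun y => FanSib x y), f (y.1 : ℕ) := by
      refine Finset.sum_nbij' (sibOf x hx)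
        (fun y => if h : (x.1 : ℕ) - 1 < (y.1 : ℕ) then (y.2 ⟨(x.1 : ℕ) - 1, h⟩).2 else c)
        ?_ ?_ ?_ ?_ ?_
      · intro b hb
        rw [Finset.mem_filter] at hb
        simp only [Finset.mem_filter, Finset.mem_univ, true_and]
        exact fanSib_sibOf x hx b hb.2
      · intro y hy
        rw [Finset.mem_filter] at hy ⊢
        obtain ⟨-, h1, hpos, hpre, hlast⟩ := hy
        refine ⟨Finset.mem_univ _, ?_⟩
        show (if h : (x.1 : ℕ) - 1 < (y.1 : ℕ) then (y.2 ⟨(x.1 : ℕ) - 1, h⟩).2 else c) ≠ c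
        rw [dif_pos (show (x.1 : ℕ) - 1 < (y.1 : ℕ) by omega)]
        obtain ⟨e1, e2⟩ := hlast ⟨(x.1 : ℕ) - 1, by omega⟩
          (show (x.1 : ℕ) - 1 + 1 = (x.1 : ℕ) by omega)
        exact e2
      · intro b hb
        show (if h : (x.1 : ℕ) - 1 < ((sibOf x hx b).1 : ℕ)
          then ((sibOf x hx b).2 ⟨(x.1 : ℕ) - 1, h⟩).2 else c) = b
        rw [dif_pos (show (x.1 : ℕ) - 1 < ((sibOf x hx b).1 : ℕ) from Nat.sub_lt hx one_pos)]
        exact congrArg Prod.snd (sibOf_snd_eq x hx b ⟨(x.1 : ℕ) - 1, Nat.sub_lt hx one_pos⟩ (show (x.1 : ℕ) - 1 + 1 = (x.1 : ℕ) by omega))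
      · intro y hy
        rw [Finset.mem_filter] at hy
        refine sibOf_eq x hx y hy.2 _ ?_
        intro h
        exact dif_pos h
      · intro b _
        rfl
    rw [← key, Finset.sum_const]
    have hfe : (univ.filter fun b : Fin (d - 1) => b ≠ c) = univ.erase c :=
      Finset.filter_ne' _ _
    rw [hfe, Finset.card_erase_of_mem (Finset.mem_univ _)]
    simp only [Finset.card_univ, Fintype.card_fin]
    rw [nsmul_eq_mul]
    have hcast : ((d - 1 - 1 : ℕ) : ℝ) = (d : ℝ) - 2 := by
      have h' : d - 1 - 1 = d - 2 := by omega
      rw [h', Nat.cast_sub (by omega : 2 ≤ d)]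
      norm_num
    rw [hcast]
  · have hno : ∀ y : FanV k d r, ¬ FanSib x y := by
      intro y h
      obtain ⟨-, hpos, -⟩ := h
      omega
    simp [hno, hx]

end Lemmas

open Classical in
/-- Adjacency matrix of the graph `Y^{k,d}_r`. -/
noncomputable def FanAdjMatrix (k d r : ℕ) : Matrix (FanV k d r) (FanV k d r) ℝ :=
  fun x y => if FanAdj x y then 1 else 0

/-- The polynomials `F^{k,d}_n`: `F^{k,d}_0 = 0`, `F^{k,d}_1 = 1`,
`F^{k,d}_{n+1} = (x − (d−2))·F^{k,d}_n − k(d−1)·F^{k,d}_{n-1}`. -/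
noncomputable def Fpoly (k d : ℕ) : ℕ → Polynomial ℝ
  | 0 => 0
  | 1 => 1
  | n + 2 => (X - C ((d : ℝ) - 2)) * Fpoly k d (n + 1)
      - C ((k : ℝ) * ((d : ℝ) - 1)) * Fpoly k d n

/-- The polynomials `G^{k,d}_n = x·F^{k,d}_n − k(d−1)·F^{k,d}_{n-1}`. -/
noncomputable def Gpoly (k d n : ℕ) : Polynomial ℝ :=
  X * Fpoly k d n - C ((k : ℝ) * ((d : ℝ) - 1)) * Fpoly k d (n - 1)

/-- For `k ≥ 2`, `d ≥ 2`, `r ≥ 1`: if `lam` is a root of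
`G^{k,d}_{r+1}`, then `lam` is an eigenvalue of the adjacency matrix of the upper
adjacency graph `Y^{k,d}_r` of the `k`-regular rooted fan of dimension `d`. -/
theorem fan_eigenvalue_of_root_G (k d r : ℕ) (hk : 2 ≤ k) (hd : 2 ≤ d) (hr : 1 ≤ r)
    (lam : ℝ) (hroot : (Gpoly k d (r + 1)).IsRoot lam) :
    ∃ v : FanV k d r → ℝ, v ≠ 0 ∧ (FanAdjMatrix k d r).mulVec v = lam • v := by
  classical
  refine ⟨fun y => (Fpoly k d (r + 1 - (y.1 : ℕ))).eval lam, ?_, ?_⟩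
  · intro h0
    have h1 : (Fpoly k d (r + 1 - r)).eval lam = 0 :=
      congrFun h0 (⟨⟨r, by omega⟩, fun _ => (⟨0, by omega⟩, ⟨0, by omega⟩)⟩ : FanV k d r)
    rw [show r + 1 - r = 1 by omega] at h1
    simp [Fpoly] at h1
  · funext x
    have hsum : (FanAdjMatrix k d r).mulVec
          (fun y => (Fpoly k d (r + 1 - (y.1 : ℕ))).eval lam) x
        = ∑ y : FanV k d r,
            (if FanAdj x y then (Fpoly k d (r + 1 - (y.1 : ℕ))).eval lam else 0) := by
      simp [Matrix.mulVec, dotProduct, FanAdjMatrix, ite_mul, one_mul, zero_mul]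
    rw [hsum]
    have hsplit : ∑ y : FanV k d r,
          (if FanAdj x y then (Fpoly k d (r + 1 - (y.1 : ℕ))).eval lam else 0)
        = (∑ y : FanV k d r,
            (if FanExt x y then (Fpoly k d (r + 1 - (y.1 : ℕ))).eval lam else 0))
          + (∑ y : FanV k d r,
            (if FanExt y x then (Fpoly k d (r + 1 - (y.1 : ℕ))).eval lam else 0))
          + (∑ y : FanV k d r,
            (if FanSib x y then (Fpoly k d (r + 1 - (y.1 : ℕ))).eval lam else 0)) := by
      rw [← Finset.sum_add_distrib, ← Finset.sum_add_distrib]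
      exact Finset.sum_congr rfl fun y _ => adj_split x y _
    rw [hsplit]
    set F : ℕ → ℝ := fun m => (Fpoly k d (r + 1 - m)).eval lam with hF
    rw [sum_fanExt_child hk hd x F (fun h => by
        show (Fpoly k d (r + 1 - ((x.1 : ℕ) + 1))).eval lam = 0
        rw [h, show r + 1 - (r + 1) = 0 by omega]
        simp [Fpoly]),
      sum_fanExt_parent x F, sum_fanSib hd x F]
    show _ = lam * F (x.1 : ℕ)
    have hMr : (x.1 : ℕ) ≤ r := by have := x.1.isLt; omega
    by_cases hM : 0 < (x.1 : ℕ)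
    · rw [if_pos hM, if_pos hM]
      set n : ℕ := r - (x.1 : ℕ) with hn
      have e1 : F ((x.1 : ℕ) + 1) = (Fpoly k d n).eval lam := by
        show (Fpoly k d (r + 1 - ((x.1 : ℕ) + 1))).eval lam = _
        rw [show r + 1 - ((x.1 : ℕ) + 1) = n by omega]
      have e2 : F (x.1 : ℕ) = (Fpoly k d (n + 1)).eval lam := by
        show (Fpoly k d (r + 1 - (x.1 : ℕ))).eval lam = _
        rw [show r + 1 - (x.1 : ℕ) = n + 1 by omega]
      have e3 : F ((x.1 : ℕ) - 1) = (Fpoly k d (n + 2)).eval lam := by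
        show (Fpoly k d (r + 1 - ((x.1 : ℕ) - 1))).eval lam = _
        rw [show r + 1 - ((x.1 : ℕ) - 1) = n + 2 by omega]
      rw [e1, e2, e3]
      have hF2 : (Fpoly k d (n + 2)).eval lam
          = (lam - ((d : ℝ) - 2)) * (Fpoly k d (n + 1)).eval lam
            - (k : ℝ) * ((d : ℝ) - 1) * (Fpoly k d n).eval lam := by
        show ((X - C ((d : ℝ) - 2)) * Fpoly k d (n + 1)
          - C ((k : ℝ) * ((d : ℝ) - 1)) * Fpoly k d n).eval lam = _
        simp only [eval_mul, eval_sub, eval_X, eval_C]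
      rw [hF2]
      ring
    · rw [if_neg hM, if_neg hM]
      have hM0 : (x.1 : ℕ) = 0 := by omega
      rw [hM0]
      have e1 : F (0 + 1) = (Fpoly k d r).eval lam := by
        show (Fpoly k d (r + 1 - 1)).eval lam = _
        rw [show r + 1 - 1 = r by omega]
      have e2 : F 0 = (Fpoly k d (r + 1)).eval lam := by
        show (Fpoly k d (r + 1 - 0)).eval lam = _
        rw [show r + 1 - 0 = r + 1 by omega]
      rw [e1, e2]
      have hg : lam * (Fpoly k d (r + 1)).eval lam
          - (k : ℝ) * ((d : ℝ) - 1) * (Fpoly k d r).eval lam = 0 := by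
        have := hroot
        simp only [Gpoly, IsRoot, eval_sub, eval_mul, eval_X, eval_C] at this
        rw [show r + 1 - 1 = r by omega] at this
        linarith
      linarith
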